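/- arXiv:1607.05392 — 3 statements merged into one kernel-verified Lean document; each statement's English description precedes it below -/
import Mathlib

section
/- Let G be a connected graph with a perfect matching M. Then the anti-forcing number af(G, M) of M is at most the cyclomatic number |E(G)| − |V(G)| + 1 of G. -/
open scoped Classical

variable {V : Type*} [Fintype V] [DecidableEq V]

/-- `M` is a perfect matching of `G`: a set of edges of `G` such that every
vertex lies in exactly one edge of `M`. -/
def IsPM (G : SimpleGraph V) (M : Set (Sym2 V)) : Prop :=
  M ⊆ G.edgeSet ∧ ∀ v : V, ∃! e, e ∈ M ∧ v ∈ e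

/-- `M` is the unique perfect matching of `G`. -/
def IsUniquePM (G : SimpleGraph V) (M : Set (Sym2 V)) : Prop :=
  IsPM G M ∧ ∀ M', IsPM G M' → M' = M

/-- A closed walk `c` is an `M`-alternating cycle: it is a cycle of even length
whose edges lie alternately in `M` and outside `M`. -/
def IsAltCycle {G : SimpleGraph V} (M : Set (Sym2 V)) {v : V} (c : G.Walk v v) : Prop :=
  c.IsCycle ∧ Even c.edges.length ∧
    ((∀ i (h : i < c.edges.length), c.edges.get ⟨i, h⟩ ∈ M ↔ Even i) ∨
     (∀ i (h : i < c.edges.length), c.edges.get ⟨i, h⟩ ∈ M ↔ ¬ Even i))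

/-- `S` is an anti-forcing set of the perfect matching `M` of `G`:
`S` consists of edges of `G` not in `M` and `M` is the unique perfect matching
of `G - S`. -/
def IsAntiForcingSet (G : SimpleGraph V) (M S : Set (Sym2 V)) : Prop :=
  S ⊆ G.edgeSet \ M ∧ IsUniquePM (G.deleteEdges S) M

/-- The anti-forcing number of a perfect matching `M` of `G`. -/
noncomputable def af (G : SimpleGraph V) (M : Set (Sym2 V)) : ℕ :=
  sInf {n | ∃ S : Finset (Sym2 V), S.card = n ∧ IsAntiForcingSet G M ↑S}

/-! A perfect matching `M`, viewed as a graph, is acyclic, so it extends to a spanning tree `T`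
of `G`. Two perfect matchings of a forest coincide, because their symmetric difference is a
disjoint union of cycles. Hence deleting the `|E(G)| - |V(G)| + 1` edges of `G` outside `T`
leaves `M` as the unique perfect matching. -/

namespace SimpleGraph

variable {W : Type*} {G : SimpleGraph W}

lemma IsAcyclic.eq_bot_of_isCycles [Finite W] (hG : G.IsAcyclic) (hcyc : G.IsCycles) : G = ⊥ := by
  by_contra hne
  obtain ⟨v, w, hvw⟩ := ne_bot_iff_exists_adj.mp hne
  obtain ⟨u, c, hc, -⟩ := adj_and_reachable_delete_edges_iff_exists_cycle.mp
    ⟨hvw, hcyc.reachable_deleteEdges hvw⟩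
  exact hG c hc

open scoped symmDiff in
lemma IsAcyclic.eq_of_isPerfectMatching [Finite W] (hG : G.IsAcyclic) {M M' : G.Subgraph}
    (hM : M.IsPerfectMatching) (hM' : M'.IsPerfectMatching) : M = M' := by
  have hle : M.spanningCoe ∆ M'.spanningCoe ≤ G :=
    symmDiff_le_sup.trans (sup_le M.spanningCoe_le M'.spanningCoe_le)
  have hsymm : M.spanningCoe ∆ M'.spanningCoe = ⊥ :=
    (hG.anti hle).eq_bot_of_isCycles (hM.symmDiff_isCycles hM')
  exact Subgraph.ext (by rw [hM.2.verts_eq_univ, hM'.2.verts_eq_univ])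
    (Subgraph.spanningCoe_inj.mp (symmDiff_eq_bot.mp hsymm))

lemma isAcyclic_of_subsingleton_neighborSet (h : ∀ v, (G.neighborSet v).Subsingleton) :
    G.IsAcyclic := by
  intro u c hc
  have h2 := hc.ncard_neighborSet_toSubgraph_eq_two c.start_mem_support
  have hsub := (h u).anti (c.toSubgraph.neighborSet_subset u)
  have h1 := (Set.ncard_le_one hsub.finite).mpr hsub
  omega

end SimpleGraph

section PerfectMatching

open SimpleGraph

variable {W : Type*} {G : SimpleGraph W} {M : Set (Sym2 W)}

lemma IsPM.fromEdgeSet_le (hM : IsPM G M) : fromEdgeSet M ≤ G :=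
  (G.fromEdgeSet_le).mpr (Set.sdiff_subset.trans hM.1)

lemma IsPM.edgeSet_fromEdgeSet (hM : IsPM G M) : (fromEdgeSet M).edgeSet = M := by
  rw [SimpleGraph.edgeSet_fromEdgeSet, sdiff_eq_left, Set.disjoint_left]
  exact fun e he => G.not_isDiag_of_mem_edgeSet (hM.1 he)

lemma IsPM.isPerfectMatching (hM : IsPM G M) :
    (G.toSubgraph (fromEdgeSet M) hM.fromEdgeSet_le).IsPerfectMatching := by
  rw [Subgraph.isPerfectMatching_iff]
  intro v
  obtain ⟨e, ⟨heM, hve⟩, huniq⟩ := hM.2 v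
  obtain ⟨w, rfl⟩ := Sym2.mem_iff_exists.mp hve
  refine ⟨w, ⟨heM, (G.mem_edgeSet.mp (hM.1 heM)).ne⟩, fun x hx => ?_⟩
  exact Sym2.congr_right.mp (huniq _ ⟨hx.1, Sym2.mem_mk_left v x⟩)

lemma IsPM.isAcyclic_fromEdgeSet (hM : IsPM G M) : (fromEdgeSet M).IsAcyclic :=
  isAcyclic_of_subsingleton_neighborSet fun _ _ hw _ hw' =>
    hM.isPerfectMatching.1.eq_of_adj_left hw hw'

lemma SimpleGraph.IsAcyclic.isUniquePM [Finite W] (hG : G.IsAcyclic) (hM : IsPM G M) :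
    IsUniquePM G M := by
  refine ⟨hM, fun M' hM' => ?_⟩
  have h := congrArg Subgraph.spanningCoe (hG.eq_of_isPerfectMatching hM'.isPerfectMatching
    hM.isPerfectMatching)
  rw [← hM'.edgeSet_fromEdgeSet, ← hM.edgeSet_fromEdgeSet]
  exact congrArg edgeSet h

lemma isAntiForcingSet_sdiff_edgeSet [Finite W] {T : SimpleGraph W} (hTG : T ≤ G)
    (hT : T.IsAcyclic) (hM : IsPM T M) : IsAntiForcingSet G M (G.edgeSet \ T.edgeSet) := by
  refine ⟨Set.sdiff_subset_sdiff_right hM.1, ?_⟩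
  rw [deleteEdges_sdiff_eq_of_le hTG]
  exact hT.isUniquePM hM

end PerfectMatching

/-- For a connected graph `G` with a perfect matching `M`,
`af(G, M) ≤ |E(G)| - |V(G)| + 1` (the cyclomatic number). -/
theorem statement3 (G : SimpleGraph V) (hG : G.Connected)
    (M : Set (Sym2 V)) (hM : IsPM G M) :
    (af G M : ℤ) ≤ (G.edgeSet.ncard : ℤ) - Fintype.card V + 1 := by
  obtain ⟨T, hMle, hTG, hT⟩ :=
    hG.exists_isTree_le_of_le_of_isAcyclic hM.fromEdgeSet_le hM.isAcyclic_fromEdgeSet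
  have hMT : IsPM T M := ⟨hM.edgeSet_fromEdgeSet ▸ SimpleGraph.edgeSet_mono hMle, hM.2⟩
  have haf : af G M ≤ (G.edgeSet \ T.edgeSet).ncard := by
    rw [Set.ncard_eq_toFinset_card']
    exact Nat.sInf_le ⟨_, rfl, by
      rw [Set.coe_toFinset]; exact isAntiForcingSet_sdiff_edgeSet hTG hT.isAcyclic hMT⟩
  have hTsub : T.edgeSet ⊆ G.edgeSet := SimpleGraph.edgeSet_mono hTG
  have hdiff : (G.edgeSet \ T.edgeSet).ncard = G.edgeSet.ncard - T.edgeSet.ncard :=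
    Set.ncard_sdiff hTsub
  have hle : T.edgeSet.ncard ≤ G.edgeSet.ncard := Set.ncard_le_ncard hTsub
  have htree : T.edgeSet.ncard + 1 = Fintype.card V := by
    rw [← hT.card_edgeFinset, ← SimpleGraph.coe_edgeFinset, Set.ncard_coe_finset]
  omega
end

section
/- If a connected graph G has a perfect matching M and a spanning tree T with M ⊆ E(T), and some edge e ∈ E(G) \ E(T) is such that the unique cycle of T + e is not M-alternating, then af(G, M) ≤ |E(G)| − |V(G)|, i.e., strictly less than the cyclomatic number of G. -/
open scoped Classical

variable {V : Type*} [Fintype V] [DecidableEq V]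

/-!
Delete from `G` every edge outside `H = T + e`. The graph `H` has `|V|` edges, so `|E(G)| - |V|`
edges are deleted, and the deletion set is anti-forcing: a second perfect matching `M'` of `H`
would make `M ∆ M'` a nonempty union of cycles alternating between `M` and `M'`, while the
only cycle of `H`, the cycle of `T + e`, is not `M`-alternating.
-/

open SimpleGraph

open scoped symmDiff

section
omit [Fintype V] [DecidableEq V]

lemma IsPM.existsUnique_adj {G : SimpleGraph V} {M : Set (Sym2 V)} (hM : IsPM G M) (v : V) :
    ∃! w, (fromEdgeSet M).Adj v w := by
  obtain ⟨e, ⟨heM, hve⟩, he⟩ := hM.2 v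
  have hvw : s(v, Sym2.Mem.other hve) = e := Sym2.other_spec hve
  refine ⟨Sym2.Mem.other hve, ?_, fun w hw => ?_⟩
  · have hadj : G.Adj v (Sym2.Mem.other hve) := by rw [← G.mem_edgeSet, hvw]; exact hM.1 heM
    exact (fromEdgeSet_adj _).2 ⟨hvw.symm ▸ heM, hadj.ne⟩
  · rw [← Sym2.congr_right, hvw]
    exact he _ ⟨(fromEdgeSet_adj _).1 hw |>.1, Sym2.mem_mk_left v w⟩

lemma IsPM.isPerfectMatching_top {G : SimpleGraph V} {M : Set (Sym2 V)} (hM : IsPM G M) :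
    (⊤ : (fromEdgeSet M).Subgraph).IsPerfectMatching :=
  Subgraph.isPerfectMatching_iff.2 <| by simpa using hM.existsUnique_adj

lemma IsAltCycle.mapLe {G G' : SimpleGraph V} {M : Set (Sym2 V)} (h : G ≤ G') {u : V}
    {c : G.Walk u u} (hc : IsAltCycle M c) : IsAltCycle M (c.mapLe h) := by
  simpa [IsAltCycle, Walk.edges_mapLe_eq_edges] using hc

lemma SimpleGraph.IsAlternating.mk_mem_iff_not_mem {D : SimpleGraph V} {M : Set (Sym2 V)}
    (hD : D.IsAlternating (fromEdgeSet M)) {v w w' : V} (hww' : w ≠ w') (hw : D.Adj v w)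
    (hw' : D.Adj v w') : s(v, w) ∈ M ↔ s(v, w') ∉ M := by
  simpa [hw.ne, hw'.ne] using hD hww' hw hw'

lemma SimpleGraph.Walk.IsTrail.mk_getVert_ne {G : SimpleGraph V} {u v : V} {p : G.Walk u v}
    (hp : p.IsTrail) {i j : ℕ} (hi : i < p.length) (hj : j < p.length) (hij : i ≠ j) :
    s(p.getVert i, p.getVert (i + 1)) ≠ s(p.getVert j, p.getVert (j + 1)) := by
  rw [← Walk.getElem_edges (by simpa), ← Walk.getElem_edges (by simpa)]
  exact fun h => hij ((hp.edges_nodup.getElem_inj_iff).1 h)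

lemma SimpleGraph.Walk.IsCycle.isAltCycle {D : SimpleGraph V} {M : Set (Sym2 V)}
    (hD : D.IsAlternating (fromEdgeSet M)) {u : V} {p : D.Walk u u} (hp : p.IsCycle) :
    IsAltCycle M p := by
  have hL := hp.three_le_length
  have alt_succ : ∀ i (hi : i + 1 < p.length),
      p.edges[i]'(by simp; omega) ∈ M ↔ p.edges[i + 1]'(by simpa) ∉ M := by
    intro i hi
    simp only [Walk.getElem_edges]
    rw [Sym2.eq_swap]
    refine hD.mk_mem_iff_not_mem
      (fun h => hp.isTrail.mk_getVert_ne (i := i) (j := i + 1) (by omega) hi (by omega) ?_)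
      (p.adj_getVert_succ (by omega)).symm (p.adj_getVert_succ hi)
    rw [h, Sym2.eq_swap]
  -- the first and last edges meet at `u`; this is what forces the length to be even
  have alt_wrap :
      p.edges[0]'(by simp; omega) ∈ M ↔ p.edges[p.length - 1]'(by simp; omega) ∉ M := by
    have hlast : p.getVert (p.length - 1 + 1) = u := by
      rw [Nat.sub_add_cancel (by omega), Walk.getVert_length]
    have h0 := p.adj_getVert_succ (i := 0) (by omega)
    have h1 := p.adj_getVert_succ (i := p.length - 1) (by omega)
    have h01 := hp.isTrail.mk_getVert_ne (i := 0) (j := p.length - 1) (by omega) (by omega)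
      (by omega)
    simp only [Walk.getElem_edges]
    rw [Walk.getVert_zero] at h0 h01 ⊢
    rw [hlast] at h1 h01 ⊢
    rw [Sym2.eq_swap (a := p.getVert (p.length - 1))] at h01 ⊢
    exact hD.mk_mem_iff_not_mem (fun h => h01 (by rw [h])) h0 h1.symm
  have parity : ∀ i (hi : i < p.length),
      p.edges[i]'(by simpa) ∈ M ↔ (Even i ↔ p.edges[0]'(by simp; omega) ∈ M) := by
    intro i hi
    induction i with
    | zero => simp
    | succ i ih => rw [← not_iff_not, ← alt_succ i hi, ih (by omega), Nat.even_add_one]; tauto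
  have hodd : ¬ Even (p.length - 1) := fun h => by
    have := parity (p.length - 1) (by omega); tauto
  refine ⟨hp, ?_, ?_⟩
  · rw [Nat.even_sub (by omega)] at hodd
    simpa using hodd
  · by_cases h0 : p.edges[0]'(by simp; omega) ∈ M
    · exact Or.inl fun i hi => by rw [List.get_eq_getElem, parity i (by simpa using hi)]; tauto
    · exact Or.inr fun i hi => by rw [List.get_eq_getElem, parity i (by simpa using hi)]; tauto

lemma exists_isAltCycle_of_ne [Finite V] {H : SimpleGraph V} {M M' : Set (Sym2 V)}
    (hM : IsPM H M) (hM' : IsPM H M') (hne : M' ≠ M) :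
    ∃ (v : V) (c : H.Walk v v), IsAltCycle M c := by
  set D := fromEdgeSet M ∆ fromEdgeSet M'
  have hcyc : D.IsCycles := by
    simpa using hM.isPerfectMatching_top.symmDiff_isCycles hM'.isPerfectMatching_top
  have halt : D.IsAlternating (fromEdgeSet M) := by
    simpa using hM.isPerfectMatching_top.isAlternating_symmDiff_left hM'.isPerfectMatching_top
  have hDH : D ≤ H := symmDiff_le_sup.trans <| sup_le
    ((fromEdgeSet_le H).2 fun _ h => hM.1 h.1) ((fromEdgeSet_le H).2 fun _ h => hM'.1 h.1)
  obtain ⟨e, he⟩ := Set.symmDiff_nonempty.2 hne.symm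
  induction e using Sym2.ind with
  | _ a b =>
  have hab : D.Adj a b := by
    have hne : a ≠ b := by
      rcases he with ⟨h, -⟩ | ⟨h, -⟩
      exacts [(H.mem_edgeSet.1 (hM.1 h)).ne, (H.mem_edgeSet.1 (hM'.1 h)).ne]
    simpa [D, symmDiff_def, Set.mem_symmDiff, hne] using he
  obtain ⟨p, hp, -⟩ := hcyc.exists_cycle_toSubgraph_verts_eq_connectedComponentSupp
    (c := D.connectedComponentMk a) rfl ⟨b, hab⟩
  exact ⟨a, p.mapLe hDH, (hp.isAltCycle halt).mapLe hDH⟩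

lemma isUniquePM_of_forall_not_isAltCycle [Finite V] {H : SimpleGraph V} {M : Set (Sym2 V)}
    (hM : IsPM H M) (h : ∀ (v : V) (c : H.Walk v v), ¬ IsAltCycle M c) : IsUniquePM H M :=
  ⟨hM, fun _ hM' => by_contra fun hne =>
    let ⟨v, c, hc⟩ := exists_isAltCycle_of_ne hM hM' hne
    h v c hc⟩

lemma af_le_ncard [Finite V] {G : SimpleGraph V} {M S : Set (Sym2 V)}
    (hS : IsAntiForcingSet G M S) : af G M ≤ S.ncard :=
  Nat.sInf_le ⟨S.toFinite.toFinset, (Set.ncard_eq_toFinset_card S).symm, by simpa using hS⟩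

lemma af_le_ncard_sub_ncard [Finite V] {G H : SimpleGraph V} {M : Set (Sym2 V)} (hHG : H ≤ G)
    (hMH : M ⊆ H.edgeSet) (hM : IsUniquePM H M) :
    (af G M : ℤ) ≤ G.edgeSet.ncard - H.edgeSet.ncard := by
  have hanti : IsAntiForcingSet G M (G.edgeSet \ H.edgeSet) :=
    ⟨Set.sdiff_subset_sdiff_right hMH, by rwa [deleteEdges_sdiff_eq_of_le hHG]⟩
  have hcard := Set.ncard_sdiff_add_ncard_of_subset (edgeSet_mono hHG) G.edgeSet.toFinite
  have := af_le_ncard hanti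
  omega

end

lemma SimpleGraph.IsTree.ncard_edgeSet_sup_edge {T : SimpleGraph V} (hT : T.IsTree) {e : Sym2 V}
    (he : ¬ e.IsDiag) (heT : e ∉ T.edgeSet) :
    (T ⊔ fromEdgeSet {e}).edgeSet.ncard = Fintype.card V := by
  have hedges : (T ⊔ fromEdgeSet {e}).edgeSet = insert e T.edgeSet := by
    ext x
    by_cases hx : x = e <;> simp [hx, he, or_comm]
  rw [hedges, Set.ncard_insert_of_notMem heT, ← hT.card_edgeFinset, ← coe_edgeFinset,
    Set.ncard_coe_finset]

theorem statement7_general (G T : SimpleGraph V)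
    (M : Set (Sym2 V)) (hM : IsPM G M)
    (hTG : T ≤ G) (hT : T.IsTree) (hMT : M ⊆ T.edgeSet)
    (e : Sym2 V) (he : e ∈ G.edgeSet) (heT : e ∉ T.edgeSet)
    (hcyc : ∀ (v : V) (c : (T ⊔ SimpleGraph.fromEdgeSet {e}).Walk v v),
      c.IsCycle → ¬ IsAltCycle M c) :
    (af G M : ℤ) ≤ (G.edgeSet.ncard : ℤ) - Fintype.card V := by
  set H := T ⊔ fromEdgeSet {e}
  have hMH : M ⊆ H.edgeSet := hMT.trans (edgeSet_mono le_sup_left)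
  have hHG : H ≤ G := sup_le hTG ((fromEdgeSet_le G).2 fun _ h => h.1 ▸ he)
  have hunique : IsUniquePM H M :=
    isUniquePM_of_forall_not_isAltCycle ⟨hMH, hM.2⟩ fun v c hc => hcyc v c hc.1 hc
  rw [← hT.ncard_edgeSet_sup_edge (G.not_isDiag_of_mem_edgeSet he) heT]
  exact af_le_ncard_sub_ncard hHG hMH hunique

/-- If `T` is a spanning tree of `G` containing the perfect
matching `M` and some edge `e ∈ E(G) \ E(T)` is such that the unique cycle of
`T + e` is not `M`-alternating, then `af(G, M) ≤ |E(G)| - |V(G)|`, i.e. is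
strictly less than the cyclomatic number. -/
theorem statement7 (G T : SimpleGraph V) (hG : G.Connected)
    (M : Set (Sym2 V)) (hM : IsPM G M)
    (hTG : T ≤ G) (hT : T.IsTree) (hMT : M ⊆ T.edgeSet)
    (e : Sym2 V) (he : e ∈ G.edgeSet) (heT : e ∉ T.edgeSet)
    (hcyc : ∀ (v : V) (c : (T ⊔ SimpleGraph.fromEdgeSet {e}).Walk v v),
      c.IsCycle → ¬ IsAltCycle M c) :
    (af G M : ℤ) ≤ (G.edgeSet.ncard : ℤ) - Fintype.card V :=
  statement7_general G T M hM hTG hT hMT e he heT hcyc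
end

section
/- Let G be a straight chain polyomino with n squares (n ≥ 1). Then the minimum anti-forcing number of G is af(G) = ⌈n/2⌉ and the maximum anti-forcing number is Af(G) = n. -/
open scoped Classical

variable {V : Type*} [Fintype V] [DecidableEq V]

/-- The minimum anti-forcing number of `G`. -/
noncomputable def afMin (G : SimpleGraph V) : ℕ :=
  sInf {n | ∃ M, IsPM G M ∧ af G M = n}

/-- The maximum anti-forcing number of `G`. -/
noncomputable def Af (G : SimpleGraph V) : ℕ :=
  sSup {n | ∃ M, IsPM G M ∧ af G M = n}

/-- The straight chain polyomino with `n` squares: the `2 × (n + 1)` grid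
graph. -/
def straightChain (n : ℕ) : SimpleGraph (Fin 2 × Fin (n + 1)) :=
  SimpleGraph.fromRel (fun a b =>
    (a.1 = b.1 ∧ a.2.val + 1 = b.2.val) ∨ (a.2 = b.2 ∧ a.1 ≠ b.1))

/-!
Perfect matchings of the `2 × (n + 1)` ladder are domino tilings, recorded by the set `P` of
left columns of the horizontal dominoes. A set of edges avoiding `P` is anti-forcing iff it meets
every other tiling, so `k` tilings whose sets of edges outside `P` are pairwise disjoint force `k`
edges. For the all-vertical tiling the `n` tilings with a single horizontal domino give `n`. For
any tiling, induction from the right end gives `⌊(n + 1) / 2⌋ = ⌈n / 2⌉`: a final horizontal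
domino can be turned vertical, and a final run "vertical, `k` horizontal, vertical" has `k + 1`
independent changes (turn one of the horizontal dominoes vertical, or retile the whole run
horizontally). Conversely, the rungs at the even columns of the tiling by horizontal dominoes
from the left, and for any tiling the rungs under horizontal dominoes together with the top rail
of every other square, are anti-forcing sets of sizes `⌊(n + 1) / 2⌋` and `n`.
-/

section PerfectMatching

variable {W : Type*} {G : SimpleGraph W} {M S : Set (Sym2 W)}

lemma isPM_deleteEdges_iff : IsPM (G.deleteEdges S) M ↔ IsPM G M ∧ Disjoint M S := by
  simp only [IsPM, SimpleGraph.edgeSet_deleteEdges, Set.subset_sdiff]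
  tauto

lemma IsPM.eq_of_subset {M' : Set (Sym2 W)} (hM : IsPM G M) (hM' : IsPM G M') (h : M' ⊆ M) :
    M' = M := by
  refine h.antisymm fun e he => ?_
  induction e using Sym2.ind with
  | _ v w =>
  obtain ⟨e', ⟨he', hve'⟩, -⟩ := hM'.2 v
  rwa [(hM.2 v).unique ⟨he, Sym2.mem_mk_left v w⟩ ⟨h he', hve'⟩]

lemma isAntiForcingSet_iff : IsAntiForcingSet G M S ↔
    S ⊆ G.edgeSet \ M ∧ IsPM G M ∧ ∀ M', IsPM G M' → M' ≠ M → ∃ e ∈ M', e ∈ S := by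
  simp only [IsAntiForcingSet, IsUniquePM, isPM_deleteEdges_iff, Set.not_disjoint_iff.symm]
  refine and_congr_right fun hS => ⟨fun ⟨⟨hM, _⟩, h⟩ => ⟨hM, fun M' hM' hne => ?_⟩,
    fun ⟨hM, h⟩ => ⟨⟨hM, Set.disjoint_left.2 fun e he heS => (hS heS).2 he⟩, ?_⟩⟩
  · exact fun hdisj => hne (h M' ⟨hM', hdisj⟩)
  · exact fun M' ⟨hM', hdisj⟩ => by_contra fun hne => h M' hM' hne hdisj

lemma IsPM.exists_isAntiForcingSet [Finite W] (hM : IsPM G M) :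
    ∃ S : Finset (Sym2 W), IsAntiForcingSet G M ↑S := by
  refine ⟨(Set.toFinite (G.edgeSet \ M)).toFinset, ?_⟩
  rw [Set.Finite.coe_toFinset, isAntiForcingSet_iff]
  refine ⟨subset_rfl, hM, fun M' hM' hne => ?_⟩
  obtain ⟨e, he, heM⟩ := Set.not_subset.1 fun h => hne (hM.eq_of_subset hM' h)
  exact ⟨e, he, hM'.1 he, heM⟩

end PerfectMatching

lemma card_le_card_of_pairwiseDisjoint {ι α : Type*} {s : Finset ι} {A : ι → Set α}
    (hA : (s : Set ι).PairwiseDisjoint A) {S : Finset α} (hS : ∀ i ∈ s, ∃ e ∈ S, e ∈ A i) :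
    s.card ≤ S.card := by
  choose f hfS hfA using hS
  rw [← Finset.card_attach]
  refine Finset.card_le_card_of_injOn (fun i => f i.1 i.2) (fun i _ => hfS i.1 i.2)
    fun i _ j _ hij => Subtype.ext (hA.elim i.2 j.2 ?_)
  have hj := hfA j.1 j.2
  exact Set.not_disjoint_iff.2 ⟨_, hfA i.1 i.2, by simpa [← hij] using hj⟩

namespace Ladder

inductive LadderEdge where
  | rung : ℕ → LadderEdge
  | rail : Fin 2 → ℕ → LadderEdge
  deriving DecidableEq, Inhabited

namespace LadderEdge

def ends : LadderEdge → Sym2 (Fin 2 × ℕ)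
  | rung i => s((0, i), (1, i))
  | rail r i => s((r, i), (r, i + 1))

def InRange (c : ℕ) : LadderEdge → Prop
  | rung i => i < c
  | rail _ i => i + 1 < c

@[simp] lemma mem_ends_rung {v : Fin 2 × ℕ} {i : ℕ} : v ∈ (rung i).ends ↔ v.2 = i := by
  obtain ⟨r, x⟩ := v
  fin_cases r <;> simp [ends, eq_comm]

@[simp] lemma mem_ends_rail {v : Fin 2 × ℕ} {r : Fin 2} {i : ℕ} :
    v ∈ (rail r i).ends ↔ v.1 = r ∧ (v.2 = i ∨ v.2 = i + 1) := by
  obtain ⟨s, x⟩ := v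
  simp [ends, and_or_left]

@[simp] lemma inRange_rung {c i : ℕ} : (rung i).InRange c ↔ i < c := Iff.rfl

@[simp] lemma inRange_rail {c i : ℕ} {r : Fin 2} : (rail r i).InRange c ↔ i + 1 < c := Iff.rfl

lemma lt_of_mem_ends {c : ℕ} {e : LadderEdge} (he : e.InRange c) {v : Fin 2 × ℕ}
    (hv : v ∈ e.ends) : v.2 < c := by
  cases e <;> simp only [inRange_rung, inRange_rail, mem_ends_rung, mem_ends_rail] at he hv <;>
    omega

lemma ends_injective : Function.Injective ends := by
  intro e e' h
  cases e <;> cases e' <;> simp [ends] at h ⊢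
  · exact h
  · rcases h with ⟨⟨rfl, -⟩, h, -⟩ | ⟨⟨rfl, -⟩, h, -⟩ <;> exact absurd h (by decide)
  · rcases h with ⟨⟨rfl, -⟩, h, -⟩ | ⟨⟨rfl, -⟩, h, -⟩ <;> exact absurd h (by decide)
  · rcases h with h | ⟨⟨-, h⟩, -, h'⟩
    · exact h
    · omega

lemma inRange_iff_forall_mem_ends {c : ℕ} {e : LadderEdge} :
    e.InRange c ↔ ∀ v ∈ e.ends, v.2 < c := by
  refine ⟨fun he v hv => lt_of_mem_ends he hv, fun h => ?_⟩
  cases e with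
  | rung i => simpa using h (0, i) (by simp)
  | rail r i => simpa using h (r, i + 1) (by simp)

lemma exists_ends_eq {u v : Fin 2 × ℕ}
    (h : (u.1 = v.1 ∧ u.2 + 1 = v.2) ∨ (u.2 = v.2 ∧ u.1 ≠ v.1)) :
    ∃ e : LadderEdge, e.ends = s(u, v) := by
  obtain ⟨r, x⟩ := u
  obtain ⟨r', x'⟩ := v
  rcases h with ⟨rfl, rfl⟩ | ⟨rfl, hr⟩
  · exact ⟨rail r x, rfl⟩
  · refine ⟨rung x, ?_⟩
    fin_cases r <;> fin_cases r' <;> simp [ends, Sym2.eq_swap] at hr ⊢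

end LadderEdge

open LadderEdge

/-- `P` lists the left columns of the horizontal dominoes of a domino tiling of the `2 × c`
board; the columns they do not cover carry vertical dominoes. -/
def IsTiling (c : ℕ) (P : Finset ℕ) : Prop := ∀ p ∈ P, p + 1 < c ∧ p + 1 ∉ P

lemma isTiling_empty (c : ℕ) : IsTiling c ∅ := by simp [IsTiling]

def Covered (P : Finset ℕ) (i : ℕ) : Prop := i ∈ P ∨ ∃ p ∈ P, p + 1 = i

def tilingEdges (c : ℕ) (P : Finset ℕ) : Set LadderEdge := fun
  | rung i => i < c ∧ ¬ Covered P i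
  | rail _ p => p ∈ P

@[simp] lemma rung_mem_tilingEdges {c i : ℕ} {P : Finset ℕ} :
    rung i ∈ tilingEdges c P ↔ i < c ∧ ¬ Covered P i := Iff.rfl

@[simp] lemma rail_mem_tilingEdges {c p : ℕ} {r : Fin 2} {P : Finset ℕ} :
    rail r p ∈ tilingEdges c P ↔ p ∈ P := Iff.rfl

lemma IsTiling.mono {c : ℕ} {P Q : Finset ℕ} (hP : IsTiling c P) (hQP : Q ⊆ P) : IsTiling c Q :=
  fun p hp => ⟨(hP p (hQP hp)).1, fun h => (hP p (hQP hp)).2 (hQP h)⟩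

lemma IsTiling.inRange {c : ℕ} {P : Finset ℕ} (hP : IsTiling c P) {e : LadderEdge}
    (he : e ∈ tilingEdges c P) : e.InRange c := by
  cases e with
  | rung i => exact he.1
  | rail r p => exact (hP p he).1

lemma tilingEdges_injective (c : ℕ) : Function.Injective (tilingEdges c) := by
  intro P Q h
  ext p
  simpa using Set.ext_iff.mp h (rail 0 p)

def IsLadderPM (c : ℕ) (A : Set LadderEdge) : Prop :=
  (∀ e ∈ A, e.InRange c) ∧ ∀ r : Fin 2, ∀ x < c, ∃! e, e ∈ A ∧ (r, x) ∈ e.ends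

lemma covered_of_mem_ends_rail {P : Finset ℕ} {r : Fin 2} {p : ℕ} (hp : p ∈ P)
    {v : Fin 2 × ℕ} (hv : v ∈ (rail r p).ends) : Covered P v.2 := by
  rcases (mem_ends_rail.1 hv).2 with h | h
  · exact .inl (h ▸ hp)
  · exact .inr ⟨p, hp, h.symm⟩

lemma eq_of_mem_tilingEdges {c : ℕ} {P : Finset ℕ} (hP : IsTiling c P) {e e' : LadderEdge}
    (he : e ∈ tilingEdges c P) (he' : e' ∈ tilingEdges c P) {v : Fin 2 × ℕ}
    (hv : v ∈ e.ends) (hv' : v ∈ e'.ends) : e = e' := by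
  cases e with
  | rung i =>
    cases e' with
    | rung i' => rw [← mem_ends_rung.1 hv, ← mem_ends_rung.1 hv']
    | rail r' p' => exact absurd (mem_ends_rung.1 hv ▸ covered_of_mem_ends_rail he' hv') he.2
  | rail r p =>
    cases e' with
    | rung i' => exact absurd (mem_ends_rung.1 hv' ▸ covered_of_mem_ends_rail he hv) he'.2
    | rail r' p' =>
      simp only [mem_ends_rail, rail_mem_tilingEdges] at *
      obtain ⟨rfl, h⟩ := hv
      obtain ⟨rfl, h'⟩ := hv'
      have hp := (hP p he).2
      have hp' := (hP p' he').2
      rcases lt_trichotomy p p' with hlt | rfl | hlt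
      · exact absurd (show p' = p + 1 by omega) (fun h => hp (h ▸ he'))
      · rfl
      · exact absurd (show p = p' + 1 by omega) (fun h => hp' (h ▸ he))

lemma isLadderPM_tilingEdges {c : ℕ} {P : Finset ℕ} (hP : IsTiling c P) :
    IsLadderPM c (tilingEdges c P) := by
  refine ⟨fun e he => hP.inRange he, fun r x hx => ?_⟩
  have hex : ∃ e, e ∈ tilingEdges c P ∧ (r, x) ∈ e.ends := by
    by_cases hcov : Covered P x
    · rcases hcov with hxP | ⟨p, hp, rfl⟩
      · exact ⟨rail r x, hxP, by simp⟩
      · exact ⟨rail r p, hp, by simp⟩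
    · exact ⟨rung x, ⟨hx, hcov⟩, by simp⟩
  obtain ⟨e, he, hv⟩ := hex
  exact ⟨e, ⟨he, hv⟩, fun e' ⟨he', hv'⟩ => eq_of_mem_tilingEdges hP he' he hv' hv⟩

namespace IsLadderPM

variable {c : ℕ} {A : Set LadderEdge}

lemma eq_of_mem_ends (hA : IsLadderPM c A) {e e' : LadderEdge} (he : e ∈ A) (he' : e' ∈ A)
    {v : Fin 2 × ℕ} (hv : v ∈ e.ends) (hv' : v ∈ e'.ends) : e = e' :=
  (hA.2 v.1 v.2 (lt_of_mem_ends (hA.1 e he) hv)).unique ⟨he, hv⟩ ⟨he', hv'⟩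

lemma exists_mem_ends (hA : IsLadderPM c A) (r : Fin 2) {x : ℕ} (hx : x < c) :
    ∃ e ∈ A, (r, x) ∈ e.ends :=
  (hA.2 r x hx).exists

/-- By induction on `i`: a rung at `(r', i)` would meet `rail r i` at `(r, i)`, and so would the
partner of a rail ending at `(r', i)`. -/
lemma rail_mem (hA : IsLadderPM c A) {r : Fin 2} {i : ℕ} (h : rail r i ∈ A) (r' : Fin 2) :
    rail r' i ∈ A := by
  induction i using Nat.strong_induction_on generalizing r r' with
  | _ i IH =>
  have hi : i + 1 < c := hA.1 _ h
  obtain ⟨e, he, hv⟩ := hA.exists_mem_ends r' (show i < c by omega)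
  cases e with
  | rung j =>
    cases hA.eq_of_mem_ends he h (v := (r, i)) (by simpa using hv) (by simp)
  | rail s j =>
    obtain ⟨rfl, rfl | rfl⟩ := mem_ends_rail.1 hv
    · exact he
    · have := hA.eq_of_mem_ends (IH j (by omega) he r) h (v := (r, j + 1)) (by simp) (by simp)
      simp at this

lemma exists_tiling (hA : IsLadderPM c A) : ∃ P, IsTiling c P ∧ A = tilingEdges c P := by
  set P := (Finset.range c).filter (fun p => rail 0 p ∈ A)
  have hmem : ∀ p, p ∈ P ↔ rail 0 p ∈ A := fun p => by
    simp only [P, Finset.mem_filter, Finset.mem_range, and_iff_right_iff_imp]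
    exact fun h => by have := hA.1 _ h; simp at this; omega
  have hcov : ∀ i, Covered P i → ∃ p, rail 0 p ∈ A ∧ (0, i) ∈ (rail 0 p).ends := by
    rintro i (hi | ⟨p, hp, rfl⟩)
    · exact ⟨i, (hmem i).1 hi, by simp⟩
    · exact ⟨p, (hmem p).1 hp, by simp⟩
  refine ⟨P, fun p hp => ⟨by simpa using hA.1 _ ((hmem p).1 hp), fun hp' => ?_⟩, ?_⟩
  · have := hA.eq_of_mem_ends ((hmem p).1 hp) ((hmem _).1 hp') (v := (0, p + 1)) (by simp)
      (by simp)
    simp at this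
  ext e
  cases e with
  | rung i =>
    simp only [rung_mem_tilingEdges]
    constructor
    · intro he
      refine ⟨by simpa using hA.1 _ he, fun hi => ?_⟩
      obtain ⟨p, hp, hv⟩ := hcov i hi
      cases hA.eq_of_mem_ends he hp (by simp) hv
    · rintro ⟨hic, hncov⟩
      obtain ⟨e, he, hv⟩ := hA.exists_mem_ends 0 hic
      cases e with
      | rung j => rwa [show i = j from mem_ends_rung.1 hv]
      | rail s j =>
        obtain ⟨rfl, -⟩ := mem_ends_rail.1 hv
        exact absurd (covered_of_mem_ends_rail ((hmem j).2 he) hv) hncov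
  | rail r p =>
    rw [rail_mem_tilingEdges, hmem]
    exact ⟨fun h => hA.rail_mem h 0, fun h => hA.rail_mem h r⟩

end IsLadderPM

def IsLadderAntiForcing (c : ℕ) (P : Finset ℕ) (S : Finset LadderEdge) : Prop :=
  (∀ e ∈ S, e.InRange c ∧ e ∉ tilingEdges c P) ∧
    ∀ Q, IsTiling c Q → Q ≠ P → ∃ e ∈ S, e ∈ tilingEdges c Q

lemma IsLadderAntiForcing.exists_mem_diff {c : ℕ} {P Q : Finset ℕ} {S : Finset LadderEdge}
    (hS : IsLadderAntiForcing c P S) (hQ : IsTiling c Q) (hQP : Q ≠ P) :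
    ∃ e ∈ S, e ∈ tilingEdges c Q \ tilingEdges c P := by
  obtain ⟨e, he, heQ⟩ := hS.2 Q hQ hQP
  exact ⟨e, he, heQ, (hS.1 e he).2⟩

lemma covered_iff_of_agree {P Q : Finset ℕ} {i : ℕ}
    (h : ∀ p, p ≤ i → i ≤ p + 1 → (p ∈ Q ↔ p ∈ P)) : Covered Q i ↔ Covered P i := by
  unfold Covered
  rw [h i le_rfl (by omega)]
  constructor <;> rintro (hi | ⟨p, hp, rfl⟩)
  exacts [.inl hi, .inr ⟨p, (h p (by omega) le_rfl).1 hp, rfl⟩, .inl hi,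
    .inr ⟨p, (h p (by omega) le_rfl).2 hp, rfl⟩]

lemma mem_tilingEdges_iff_of_agree_below {c c' m : ℕ} {P Q : Finset ℕ} (hc : m ≤ c)
    (hc' : m ≤ c') (h : ∀ p < m, p ∈ Q ↔ p ∈ P) {e : LadderEdge} (he : e.InRange m) :
    e ∈ tilingEdges c Q ↔ e ∈ tilingEdges c' P := by
  cases e with
  | rung i =>
    simp only [inRange_rung, rung_mem_tilingEdges] at he ⊢
    rw [covered_iff_of_agree fun p hp _ => h p (by omega)]
    simp only [show i < c by omega, show i < c' by omega, true_and]
  | rail r p =>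
    simp only [inRange_rail, rail_mem_tilingEdges] at he ⊢
    exact h p (by omega)

lemma mem_tilingEdges_iff_of_agree_above {c m : ℕ} {P Q : Finset ℕ}
    (hP : ∀ p ∈ P, p + 1 ≠ m) (hQ : ∀ q ∈ Q, q + 1 ≠ m) (h : ∀ p, m ≤ p → (p ∈ Q ↔ p ∈ P))
    {e : LadderEdge} (he : ¬ e.InRange m) : e ∈ tilingEdges c Q ↔ e ∈ tilingEdges c P := by
  have h' : ∀ p, m ≤ p + 1 → (p ∈ Q ↔ p ∈ P) := fun p hp =>
    ⟨fun hq => (h p (by have := hQ p hq; omega)).1 hq,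
      fun hq => (h p (by have := hP p hq; omega)).2 hq⟩
  cases e with
  | rung i =>
    simp only [inRange_rung, rung_mem_tilingEdges] at he ⊢
    rw [covered_iff_of_agree fun p _ hp => h' p (by omega)]
  | rail r p =>
    simp only [inRange_rail, rail_mem_tilingEdges] at he ⊢
    exact h' p (by omega)

lemma IsTiling.exists_run {c : ℕ} {P : Finset ℕ} (hP : IsTiling c P) {e : ℕ}
    (hcut : ∀ p ∈ P, p + 1 ≠ e) :
    ∃ m k, m + 2 * k = e ∧ (∀ j < k, m + 2 * j ∈ P) ∧ (m = 0 ∨ ¬ Covered P (m - 1)) := by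
  induction e using Nat.strong_induction_on with
  | _ e IH =>
  rcases Nat.eq_zero_or_pos e with rfl | he
  · exact ⟨0, 0, rfl, by simp, .inl rfl⟩
  by_cases hcov : Covered P (e - 1)
  · rcases hcov with h | ⟨p, hp, hpe⟩
    · exact absurd (by omega) (hcut _ h)
    · obtain ⟨m, k, hmk, hrun, hm⟩ := IH p (by omega) fun q hq hqp => (hP q hq).2 (hqp ▸ hp)
      refine ⟨m, k + 1, by omega, fun j hj => ?_, hm⟩
      rcases Nat.lt_succ_iff_lt_or_eq.1 hj with hj | rfl
      exacts [hrun j hj, hmk ▸ hp]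
  · exact ⟨e, 0, rfl, by simp, .inr hcov⟩

lemma eq_rung_of_mem_diff_erase {c p : ℕ} {P : Finset ℕ} {e : LadderEdge}
    (he : e ∈ tilingEdges c (P.erase p) \ tilingEdges c P) : e = rung p ∨ e = rung (p + 1) := by
  obtain ⟨he, heP⟩ := he
  cases e with
  | rung i =>
    simp only [rung_mem_tilingEdges, not_and, not_not] at he heP
    rcases heP he.1 with hi | ⟨q, hq, rfl⟩
    · by_cases hip : i = p
      · exact .inl (by rw [hip])
      · exact absurd (.inl (Finset.mem_erase.2 ⟨hip, hi⟩)) he.2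
    · by_cases hqp : q = p
      · exact .inr (by rw [hqp])
      · exact absurd (.inr ⟨q, Finset.mem_erase.2 ⟨hqp, hq⟩, rfl⟩) he.2
  | rail r q => exact absurd (Finset.mem_of_mem_erase he) heP

/-- Retile by horizontal dominoes from column `a` on. -/
lemma IsTiling.exists_retiling {c a k : ℕ} {P : Finset ℕ} (hP : IsTiling c P)
    (ha : ¬ Covered P a) (hc : a + 2 * k + 2 = c) :
    ∃ Q, IsTiling c Q ∧ Q ≠ P ∧ (∀ p < a, p ∈ Q ↔ p ∈ P) ∧
      ∀ i, rung i ∉ tilingEdges c Q \ tilingEdges c P := by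
  set Q := P.filter (· < a) ∪ (Finset.range (k + 1)).image (a + 2 * ·)
  have hmem : ∀ q, q ∈ Q ↔ (q ∈ P ∧ q < a) ∨ ∃ j ≤ k, a + 2 * j = q := fun q => by
    simp [Q]
  refine ⟨Q, fun q hq => ?_, fun h => ha (.inl (h ▸ (hmem a).2 (.inr ⟨0, by omega, rfl⟩))),
    fun p hp => by simp [hmem, hp, show ∀ j, a + 2 * j ≠ p by omega], ?_⟩
  · rcases (hmem q).1 hq with ⟨hq, hqa⟩ | ⟨j, hj, rfl⟩
    · refine ⟨(hP q hq).1, fun h => ?_⟩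
      rcases (hmem _).1 h with ⟨h, -⟩ | ⟨j, -, hj⟩
      · exact (hP q hq).2 h
      · exact ha (.inr ⟨q, hq, by omega⟩)
    · refine ⟨by omega, fun h => ?_⟩
      rcases (hmem _).1 h with ⟨-, h⟩ | ⟨j', -, hj'⟩ <;> omega
  · rintro i ⟨⟨hic, hiQ⟩, hiP⟩
    simp only [rung_mem_tilingEdges, not_and, not_not] at hiP
    refine hiQ ?_
    by_cases hia : i < a
    · exact (covered_iff_of_agree fun p hp _ => by
        simp [hmem, show p < a by omega, show ∀ j, a + 2 * j ≠ p by omega]).2 (hiP hic)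
    · rcases Nat.even_or_odd' (i - a) with ⟨j, hj | hj⟩
      · exact .inl ((hmem i).2 (.inr ⟨j, by omega, by omega⟩))
      · exact .inr ⟨a + 2 * j, (hmem _).2 (.inr ⟨j, by omega, rfl⟩), by omega⟩

lemma IsTiling.union_filter_le {c m : ℕ} {P Q : Finset ℕ} (hQ : IsTiling m Q)
    (hP : IsTiling c P) (hmc : m ≤ c) : IsTiling c (Q ∪ P.filter (m ≤ ·)) := by
  intro q hq
  simp only [Finset.mem_union, Finset.mem_filter] at hq ⊢
  rcases hq with hq | ⟨hq, hmq⟩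
  · have := hQ q hq
    refine ⟨by omega, ?_⟩
    rintro (h | ⟨-, h⟩)
    exacts [this.2 h, by omega]
  · refine ⟨(hP q hq).1, ?_⟩
    rintro (h | ⟨h, -⟩)
    exacts [by have := (hQ _ h).1; omega, (hP q hq).2 h]

namespace IsLadderAntiForcing

variable {c m : ℕ} {P : Finset ℕ} {S : Finset LadderEdge}

/-- A competing tiling of the left part, completed by `P` on the right, is hit on the left. -/
lemma restrict (hmc : m ≤ c) (hP : IsTiling c P) (hcut : ∀ p ∈ P, p + 1 ≠ m)
    (hS : IsLadderAntiForcing c P S) :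
    IsTiling m (P.filter (· < m)) ∧
      IsLadderAntiForcing m (P.filter (· < m)) (S.filter (·.InRange m)) := by
  have hbelow : ∀ p < m, p ∈ P.filter (· < m) ↔ p ∈ P := fun p hp => by simp [hp]
  refine ⟨fun p hp => ?_, fun e he => ?_, fun Q' hQ' hne => ?_⟩
  · rw [Finset.mem_filter] at hp
    have := hcut p hp.1
    exact ⟨by omega, fun h => (hP p hp.1).2 (Finset.mem_filter.1 h).1⟩
  · rw [Finset.mem_filter] at he
    refine ⟨he.2, fun h => (hS.1 e he.1).2 ?_⟩
    rwa [mem_tilingEdges_iff_of_agree_below le_rfl hmc hbelow he.2] at h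
  set Q := Q' ∪ P.filter (m ≤ ·)
  have hQ'm : ∀ q ∈ Q', q + 1 < m := fun q hq => (hQ' q hq).1
  have hmemQ : ∀ q, q ∈ Q ↔ q ∈ Q' ∨ (q ∈ P ∧ m ≤ q) := fun q => by simp [Q]
  have hQbelow : ∀ p < m, p ∈ Q ↔ p ∈ Q' := fun p hp => by
    simp [hmemQ, show ¬ m ≤ p by omega]
  have hQP : Q ≠ P := by
    intro h
    refine hne (Finset.ext fun p => ?_)
    by_cases hp : p < m
    · rw [hbelow p hp, ← h, hQbelow p hp]
    · simp only [Finset.mem_filter, hp, and_false, iff_false]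
      exact fun h => by have := hQ'm p h; omega
  obtain ⟨e, heS, heQ, heP⟩ := hS.exists_mem_diff (hQ'.union_filter_le hP hmc) hQP
  have he : e.InRange m := by
    by_contra he
    refine heP ((mem_tilingEdges_iff_of_agree_above hcut (fun q hq h => ?_) (fun p hp => ?_)
      he).1 heQ)
    · rcases (hmemQ q).1 hq with hq | ⟨-, hq⟩
      · have := hQ'm q hq; omega
      · omega
    · rw [hmemQ]
      have : p ∉ Q' := fun h => by have := hQ'm p h; omega
      tauto
  exact ⟨e, Finset.mem_filter.2 ⟨heS, he⟩,
    (mem_tilingEdges_iff_of_agree_below hmc le_rfl hQbelow he).1 heQ⟩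

/-- Tilings agreeing with `P` on the first `m` columns are hit outside them, so these hits add to
the `m / 2` edges needed on the left. -/
lemma half_add_card_le (hmc : m ≤ c) (hP : IsTiling c P) (hcut : ∀ p ∈ P, p + 1 ≠ m)
    (hS : IsLadderAntiForcing c P S)
    (IH : ∀ P' S', IsTiling m P' → IsLadderAntiForcing m P' S' → m / 2 ≤ S'.card)
    {ι : Type*} {s : Finset ι} {Q : ι → Finset ℕ}
    (hQ : ∀ i ∈ s, IsTiling c (Q i) ∧ Q i ≠ P ∧ ∀ p < m, p ∈ Q i ↔ p ∈ P)
    (hdisj : (s : Set ι).PairwiseDisjoint fun i => tilingEdges c (Q i) \ tilingEdges c P) :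
    m / 2 + s.card ≤ S.card := by
  obtain ⟨hP', hS'⟩ := hS.restrict hmc hP hcut
  have hright : s.card ≤ (S.filter (¬ ·.InRange m)).card := by
    refine card_le_card_of_pairwiseDisjoint hdisj fun i hi => ?_
    obtain ⟨hQi, hQP, hagree⟩ := hQ i hi
    obtain ⟨e, heS, heQ, heP⟩ := hS.exists_mem_diff hQi hQP
    refine ⟨e, Finset.mem_filter.2 ⟨heS, fun he => heP ?_⟩, heQ, heP⟩
    exact (mem_tilingEdges_iff_of_agree_below hmc hmc hagree he).1 heQ
  have := IH _ _ hP' hS'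
  have := Finset.card_filter_add_card_filter_not (s := S) (·.InRange m)
  omega

/-- The `k + 1` competing tilings turn one of the `k` horizontal dominoes vertical, or retile the
last `2 k + 2` columns horizontally. -/
lemma half_add_card_le_of_run {a k : ℕ} (hP : IsTiling c P) (hS : IsLadderAntiForcing c P S)
    (IH : ∀ P' S', IsTiling a P' → IsLadderAntiForcing a P' S' → a / 2 ≤ S'.card)
    (ha : ¬ Covered P a) (hc : a + 2 * k + 2 = c) (hrun : ∀ j < k, a + 1 + 2 * j ∈ P) :
    a / 2 + (k + 1) ≤ S.card := by
  obtain ⟨R, hR, hRP, hRa, hRrung⟩ := hP.exists_retiling ha hc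
  have hcut : ∀ p ∈ P, p + 1 ≠ a := fun p hp h => ha (.inr ⟨p, hp, h⟩)
  have key := hS.half_add_card_le (by omega) hP hcut IH (s := (Finset.range k).insertNone)
    (Q := fun o => o.elim R fun j => P.erase (a + 1 + 2 * j)) ?_ ?_
  · rwa [Finset.card_insertNone, Finset.card_range] at key
  · rintro (_ | j) hj
    · exact ⟨hR, hRP, hRa⟩
    · have hj : j < k := by simpa using hj
      refine ⟨hP.mono (Finset.erase_subset _ _), fun h => ?_, fun p hp => ?_⟩
      · exact (Finset.erase_eq_self.1 h) (hrun j hj)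
      · simp [Finset.mem_erase, show p ≠ a + 1 + 2 * j by omega]
  · rintro (_ | i) - (_ | j) - hij <;> refine Set.disjoint_left.2 fun e he he' => ?_
    · exact hij rfl
    · rcases eq_rung_of_mem_diff_erase he' with rfl | rfl <;> exact hRrung _ he
    · rcases eq_rung_of_mem_diff_erase he with rfl | rfl <;> exact hRrung _ he'
    · have hij : i ≠ j := fun h => hij (h ▸ rfl)
      rcases eq_rung_of_mem_diff_erase he with rfl | rfl <;> rcases eq_rung_of_mem_diff_erase he' with h | h <;>
        simp only [rung.injEq] at h <;> omega

theorem half_le_card (hP : IsTiling c P) (hS : IsLadderAntiForcing c P S) : c / 2 ≤ S.card := by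
  induction c using Nat.strong_induction_on generalizing P S with
  | _ c IH =>
  rcases Nat.lt_or_ge c 2 with hc | hc
  · omega
  by_cases hend : c - 2 ∈ P
  · have key := hS.half_add_card_le (m := c - 2) (by omega) hP
      (fun p hp h => (hP p hp).2 (by rwa [h])) (fun _ _ => IH _ (by omega)) (s := {c - 2})
      (Q := P.erase) (by
        simp only [Finset.mem_singleton, forall_eq]
        exact ⟨hP.mono (Finset.erase_subset _ _), fun h => Finset.erase_eq_self.1 h hend,
          fun p hp => by simp [Finset.mem_erase, show p ≠ c - 2 by omega]⟩)
      (by simp)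
    simp only [Finset.card_singleton] at key
    omega
  have hcut : ∀ p ∈ P, p + 1 ≠ c - 1 := fun p hp h => hend (by rwa [show c - 2 = p by omega])
  by_cases hodd : c % 2 = 1
  · obtain ⟨hP', hS'⟩ := hS.restrict (m := c - 1) (by omega) hP hcut
    have := IH _ (by omega) hP' hS'
    have := Finset.card_filter_le S (·.InRange (c - 1))
    omega
  obtain ⟨m, k, hmk, hrun, hm | hm⟩ := hP.exists_run hcut
  · omega
  have := hS.half_add_card_le_of_run hP (fun _ _ => IH (m - 1) (by omega)) hm (k := k) (by omega)
    fun j hj => by simpa [show m - 1 + 1 + 2 * j = m + 2 * j by omega] using hrun j hj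
  omega

lemma sub_one_le_card_of_empty (hS : IsLadderAntiForcing c ∅ S) : c - 1 ≤ S.card := by
  have hnew : ∀ i e, e ∈ tilingEdges c {i} \ tilingEdges c ∅ → ∃ r, e = rail r i := by
    rintro i (j | ⟨r, q⟩) ⟨he, he'⟩
    · exact absurd ⟨he.1, by simp [Covered]⟩ he'
    · exact ⟨r, by rw [Finset.mem_singleton.1 he]⟩
  have := card_le_card_of_pairwiseDisjoint (s := Finset.range (c - 1))
    (A := fun i => tilingEdges c {i} \ tilingEdges c ∅) (S := S)
    (fun i _ j _ hij => Set.disjoint_left.2 fun e he he' => by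
      obtain ⟨r, rfl⟩ := hnew i e he
      obtain ⟨r', h⟩ := hnew j _ he'
      exact hij (rail.inj h).2)
    (fun i hi => hS.exists_mem_diff (fun p hp => by simp at hp hi ⊢; omega) (by simp))
  simpa using this

end IsLadderAntiForcing

def evenPairs (c : ℕ) : Finset ℕ := (Finset.range (c / 2)).image (2 * ·)

def evenRungs (c : ℕ) : Finset LadderEdge := (Finset.range (c / 2)).image fun i => rung (2 * i)

lemma mem_evenPairs {c p : ℕ} : p ∈ evenPairs c ↔ ∃ i < c / 2, 2 * i = p := by
  simp [evenPairs]

lemma isTiling_evenPairs (c : ℕ) : IsTiling c (evenPairs c) := by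
  intro p hp
  obtain ⟨i, hi, rfl⟩ := mem_evenPairs.1 hp
  exact ⟨by omega, fun h => by obtain ⟨j, -, hj⟩ := mem_evenPairs.1 h; omega⟩

lemma card_evenRungs (c : ℕ) : (evenRungs c).card = c / 2 := by
  rw [evenRungs, Finset.card_image_of_injective _ fun i j h => by simpa using h,
    Finset.card_range]

lemma eq_evenPairs {c : ℕ} {Q : Finset ℕ} (hQ : IsTiling c Q)
    (hcov : ∀ i < c / 2, Covered Q (2 * i)) : Q = evenPairs c := by
  have hmem : ∀ i < c / 2, 2 * i ∈ Q := by
    intro i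
    induction i with
    | zero => intro h; simpa [Covered] using hcov 0 h
    | succ i IH =>
      intro hi
      rcases hcov (i + 1) hi with h | ⟨q, hq, hqi⟩
      · exact h
      · exact absurd (show q = 2 * i + 1 by omega ▸ hq) (hQ _ (IH (by omega))).2
  ext q
  rw [mem_evenPairs]
  constructor
  · intro hq
    have := (hQ q hq).1
    rcases Nat.even_or_odd' q with ⟨i, rfl | rfl⟩
    · exact ⟨i, by omega, rfl⟩
    · exact absurd hq (hQ _ (hmem i (by omega))).2
  · rintro ⟨i, hi, rfl⟩
    exact hmem i hi

lemma isLadderAntiForcing_evenRungs (c : ℕ) :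
    IsLadderAntiForcing c (evenPairs c) (evenRungs c) := by
  refine ⟨fun e he => ?_, fun Q hQ hne => ?_⟩
  · obtain ⟨i, hi, rfl⟩ := Finset.mem_image.1 he
    rw [Finset.mem_range] at hi
    exact ⟨by simp; omega, fun h => h.2 (.inl (mem_evenPairs.2 ⟨i, hi, rfl⟩))⟩
  · by_contra! h
    refine hne (eq_evenPairs hQ fun i hi => ?_)
    by_contra hcov
    exact h _ (Finset.mem_image_of_mem _ (Finset.mem_range.2 hi)) ⟨by omega, hcov⟩

def railsOrRungs (c : ℕ) (P : Finset ℕ) : Finset LadderEdge :=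
  (Finset.range (c - 1)).image fun i => if i ∈ P then rung i else rail 0 i

lemma card_railsOrRungs (c : ℕ) (P : Finset ℕ) : (railsOrRungs c P).card = c - 1 := by
  rw [railsOrRungs, Finset.card_image_of_injective, Finset.card_range]
  intro i j h
  by_cases hi : i ∈ P <;> by_cases hj : j ∈ P <;> simp_all

lemma isLadderAntiForcing_railsOrRungs {c : ℕ} {P : Finset ℕ} (hP : IsTiling c P) :
    IsLadderAntiForcing c P (railsOrRungs c P) := by
  refine ⟨fun e he => ?_, fun Q hQ hne => ?_⟩
  · obtain ⟨i, hi, rfl⟩ := Finset.mem_image.1 he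
    rw [Finset.mem_range] at hi
    by_cases hiP : i ∈ P <;> simp only [hiP, if_true, if_false]
    · exact ⟨by simp; omega, fun h => h.2 (.inl hiP)⟩
    · exact ⟨by simp; omega, hiP⟩
  by_contra! h
  have hsel : ∀ i < c - 1, (if i ∈ P then rung i else rail 0 i) ∉ tilingEdges c Q :=
    fun i hi => h _ (Finset.mem_image_of_mem _ (Finset.mem_range.2 hi))
  have hQP : Q ⊆ P := fun q hq => by
    by_contra hqP
    have := hsel q (by have := (hQ q hq).1; omega)
    simp [hqP, hq] at this
  refine hne (Finset.Subset.antisymm hQP fun p hp => ?_)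
  have := hsel p (by have := (hP p hp).1; omega)
  simp only [hp, if_true, rung_mem_tilingEdges, not_and, not_not] at this
  rcases this (by have := (hP p hp).1; omega) with h | ⟨q, hq, rfl⟩
  exacts [h, absurd hp (hP q (hQP hq)).2]

open Fin.NatCast

/-- The casts wrap around for edges outside the first `n + 1` columns. -/
def chainEdge (n : ℕ) (e : LadderEdge) : Sym2 (Fin 2 × Fin (n + 1)) :=
  e.ends.map fun v => (v.1, (v.2 : Fin (n + 1)))

def chainMatching (n : ℕ) (P : Finset ℕ) : Set (Sym2 (Fin 2 × Fin (n + 1))) :=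
  chainEdge n '' tilingEdges (n + 1) P

variable {n : ℕ}

lemma mem_chainEdge {e : LadderEdge} (he : e.InRange (n + 1)) {w : Fin 2 × Fin (n + 1)} :
    w ∈ chainEdge n e ↔ (w.1, w.2.val) ∈ e.ends := by
  rw [chainEdge, Sym2.mem_map]
  constructor
  · rintro ⟨v, hv, rfl⟩
    simpa [Fin.val_cast_of_lt (lt_of_mem_ends he hv)] using hv
  · exact fun h => ⟨_, h, by simp⟩

lemma chainEdge_injOn (n : ℕ) : Set.InjOn (chainEdge n) {e | e.InRange (n + 1)} := by
  intro e he e' he' h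
  refine ends_injective (Sym2.ext fun ⟨r, x⟩ => ?_)
  by_cases hx : x < n + 1
  · have := mem_chainEdge he (w := (r, ⟨x, hx⟩))
    rwa [h, mem_chainEdge he', iff_comm] at this
  · exact iff_of_false (fun hv => hx (lt_of_mem_ends he hv))
      (fun hv => hx (lt_of_mem_ends he' hv))

lemma chainEdge_mem_edgeSet {e : LadderEdge} (he : e.InRange (n + 1)) :
    chainEdge n e ∈ (straightChain n).edgeSet := by
  cases e with
  | rung i =>
    simp [chainEdge, ends, straightChain]
  | rail r i =>
    simp only [inRange_rail] at he
    simp only [chainEdge, ends, Sym2.map_mk, SimpleGraph.mem_edgeSet, straightChain,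
      SimpleGraph.fromRel_adj, Fin.val_cast_of_lt he, Fin.val_cast_of_lt (show i < n + 1 by omega)]
    refine ⟨fun h => ?_, by simp⟩
    have := congrArg (fun v => v.2.val) h
    simp only [Fin.val_cast_of_lt he, Fin.val_cast_of_lt (show i < n + 1 by omega)] at this
    omega

lemma exists_chainEdge_eq {f : Sym2 (Fin 2 × Fin (n + 1))}
    (hf : f ∈ (straightChain n).edgeSet) : ∃ e, e.InRange (n + 1) ∧ chainEdge n e = f := by
  induction f using Sym2.ind with
  | _ a b =>
  rw [SimpleGraph.mem_edgeSet, straightChain, SimpleGraph.fromRel_adj] at hf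
  obtain ⟨e, he⟩ : ∃ e : LadderEdge, e.ends = s((a.1, a.2.val), (b.1, b.2.val)) := by
    rcases hf.2 with h | h
    · exact exists_ends_eq (by simpa [Fin.ext_iff] using h)
    · obtain ⟨e, he⟩ := exists_ends_eq (u := (b.1, b.2.val)) (v := (a.1, a.2.val))
        (by simpa [Fin.ext_iff, eq_comm] using h)
      exact ⟨e, he.trans Sym2.eq_swap⟩
  refine ⟨e, inRange_iff_forall_mem_ends.2 fun v hv => ?_, by simp [chainEdge, he]⟩
  rw [he, Sym2.mem_iff] at hv
  rcases hv with rfl | rfl <;> exact Fin.isLt _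

lemma isPM_image_chainEdge_iff {A : Set LadderEdge} (hA : ∀ e ∈ A, e.InRange (n + 1)) :
    IsPM (straightChain n) (chainEdge n '' A) ↔ IsLadderPM (n + 1) A := by
  have hinj := (chainEdge_injOn n).mono hA
  have hunique : ∀ w : Fin 2 × Fin (n + 1), (∃! f, f ∈ chainEdge n '' A ∧ w ∈ f) ↔
      ∃! e, e ∈ A ∧ (w.1, w.2.val) ∈ e.ends := fun w => by
    refine ⟨fun ⟨_, ⟨⟨e, he, rfl⟩, hw⟩, huniq⟩ => ⟨e, ⟨he, ?_⟩, fun e' ⟨he', hw'⟩ => ?_⟩,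
      fun ⟨e, ⟨he, hw⟩, huniq⟩ => ⟨chainEdge n e, ⟨⟨e, he, rfl⟩, ?_⟩, ?_⟩⟩
    · exact (mem_chainEdge (hA e he)).1 hw
    · exact hinj he' he (huniq _ ⟨⟨e', he', rfl⟩, (mem_chainEdge (hA e' he')).2 hw'⟩)
    · exact (mem_chainEdge (hA e he)).2 hw
    · rintro _ ⟨⟨e', he', rfl⟩, hw'⟩
      rw [huniq e' ⟨he', (mem_chainEdge (hA e' he')).1 hw'⟩]
  simp only [IsPM, Set.image_subset_iff, hunique, IsLadderPM]
  exact ⟨fun h => ⟨hA, fun r x hx => h.2 (r, ⟨x, hx⟩)⟩,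
    fun h => ⟨fun e he => chainEdge_mem_edgeSet (hA e he), fun w => h.2 w.1 w.2.val w.2.isLt⟩⟩

lemma isPM_chainMatching {P : Finset ℕ} (hP : IsTiling (n + 1) P) :
    IsPM (straightChain n) (chainMatching n P) :=
  (isPM_image_chainEdge_iff fun _ he => hP.inRange he).2 (isLadderPM_tilingEdges hP)

lemma exists_tiling_of_isPM {M : Set (Sym2 (Fin 2 × Fin (n + 1)))}
    (hM : IsPM (straightChain n) M) : ∃ P, IsTiling (n + 1) P ∧ M = chainMatching n P := by
  set A := {e : LadderEdge | e.InRange (n + 1) ∧ chainEdge n e ∈ M}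
  have hMA : M = chainEdge n '' A := by
    ext f
    refine ⟨fun hf => ?_, fun ⟨e, he, hef⟩ => hef ▸ he.2⟩
    obtain ⟨e, he, rfl⟩ := exists_chainEdge_eq (hM.1 hf)
    exact ⟨e, ⟨he, hf⟩, rfl⟩
  rw [hMA, isPM_image_chainEdge_iff fun _ he => he.1] at hM
  obtain ⟨P, hP, hAP⟩ := hM.exists_tiling
  exact ⟨P, hP, by rw [hMA, hAP, chainMatching]⟩

lemma chainMatching_inj {P Q : Finset ℕ} (hP : IsTiling (n + 1) P) (hQ : IsTiling (n + 1) Q)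
    (h : chainMatching n P = chainMatching n Q) : P = Q :=
  tilingEdges_injective _ (((chainEdge_injOn n).image_eq_image_iff (fun _ he => hP.inRange he)
    (fun _ he => hQ.inRange he)).1 h)

lemma af_le_card {P : Finset ℕ} (hP : IsTiling (n + 1) P) {T : Finset LadderEdge}
    (hT : IsLadderAntiForcing (n + 1) P T) :
    af (straightChain n) (chainMatching n P) ≤ T.card := by
  have hinj : Set.InjOn (chainEdge n) T := (chainEdge_injOn n).mono fun e he => (hT.1 e he).1
  refine Nat.sInf_le ⟨T.image (chainEdge n), Finset.card_image_of_injOn hinj, ?_⟩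
  rw [isAntiForcingSet_iff, Finset.coe_image]
  refine ⟨?_, isPM_chainMatching hP, fun M' hM' hne => ?_⟩
  · rintro _ ⟨e, he, rfl⟩
    refine ⟨chainEdge_mem_edgeSet (hT.1 e he).1, ?_⟩
    rintro ⟨e', he', hee'⟩
    rw [(chainEdge_injOn n) (hP.inRange he') (hT.1 e he).1 hee'] at he'
    exact (hT.1 e he).2 he'
  · obtain ⟨Q, hQ, rfl⟩ := exists_tiling_of_isPM hM'
    obtain ⟨e, heT, heQ⟩ := hT.2 Q hQ fun h => hne (h ▸ rfl)
    exact ⟨chainEdge n e, ⟨e, heQ, rfl⟩, e, heT, rfl⟩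

lemma le_af {P : Finset ℕ} (hP : IsTiling (n + 1) P) {k : ℕ}
    (h : ∀ T, IsLadderAntiForcing (n + 1) P T → k ≤ T.card) :
    k ≤ af (straightChain n) (chainMatching n P) := by
  obtain ⟨S₀, hS₀⟩ := (isPM_chainMatching hP).exists_isAntiForcingSet
  refine le_csInf ⟨_, S₀, rfl, hS₀⟩ ?_
  rintro _ ⟨S, rfl, hS⟩
  rw [isAntiForcingSet_iff] at hS
  obtain ⟨hSE, -, hhit⟩ := hS
  set g := Function.invFunOn (chainEdge n) {e | e.InRange (n + 1)}
  have hg : ∀ f ∈ S, (g f).InRange (n + 1) ∧ chainEdge n (g f) = f := fun f hf => by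
    have hex := exists_chainEdge_eq (hSE hf).1
    exact ⟨Function.invFunOn_mem hex, Function.invFunOn_eq hex⟩
  refine (h (S.image g) ⟨fun e he => ?_, fun Q hQ hne => ?_⟩).trans Finset.card_image_le
  · obtain ⟨f, hf, rfl⟩ := Finset.mem_image.1 he
    exact ⟨(hg f hf).1, fun hP' => (hSE hf).2 ⟨g f, hP', (hg f hf).2⟩⟩
  · obtain ⟨_, ⟨e, heQ, rfl⟩, heS⟩ := hhit _ (isPM_chainMatching hQ)
      fun h => hne (chainMatching_inj hQ hP h)
    refine ⟨e, Finset.mem_image.2 ⟨_, heS, ?_⟩, heQ⟩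
    exact chainEdge_injOn n (hg _ heS).1 (hQ.inRange heQ) (hg _ heS).2

lemma half_le_af {P : Finset ℕ} (hP : IsTiling (n + 1) P) :
    (n + 1) / 2 ≤ af (straightChain n) (chainMatching n P) :=
  le_af hP fun _ hT => hT.half_le_card hP

lemma af_le {P : Finset ℕ} (hP : IsTiling (n + 1) P) :
    af (straightChain n) (chainMatching n P) ≤ n :=
  (af_le_card hP (isLadderAntiForcing_railsOrRungs hP)).trans_eq (card_railsOrRungs _ _)

lemma af_evenPairs_le : af (straightChain n) (chainMatching n (evenPairs (n + 1))) ≤ (n + 1) / 2 :=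
  (af_le_card (isTiling_evenPairs _) (isLadderAntiForcing_evenRungs _)).trans_eq
    (card_evenRungs _)

lemma le_af_empty : n ≤ af (straightChain n) (chainMatching n ∅) :=
  le_af (isTiling_empty _) fun _ hT => hT.sub_one_le_card_of_empty

end Ladder

open Ladder

theorem statement19_general (n : ℕ) :
    afMin (straightChain n) = (n + 1) / 2 ∧ Af (straightChain n) = n := by
  have hbounds : ∀ k ∈ {k | ∃ M, IsPM (straightChain n) M ∧ af (straightChain n) M = k},
      (n + 1) / 2 ≤ k ∧ k ≤ n := by
    rintro _ ⟨M, hM, rfl⟩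
    obtain ⟨P, hP, rfl⟩ := exists_tiling_of_isPM hM
    exact ⟨half_le_af hP, af_le hP⟩
  refine ⟨IsLeast.csInf_eq ⟨⟨_, isPM_chainMatching (isTiling_evenPairs _), ?_⟩,
      fun k hk => (hbounds k hk).1⟩,
    IsGreatest.csSup_eq ⟨⟨_, isPM_chainMatching (isTiling_empty _), ?_⟩,
      fun k hk => (hbounds k hk).2⟩⟩
  · exact af_evenPairs_le.antisymm (half_le_af (isTiling_evenPairs _))
  · exact (af_le (isTiling_empty _)).antisymm le_af_empty

/-- For the straight chain polyomino `G` with `n ≥ 1` squares,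
`af(G) = ⌈n / 2⌉` and `Af(G) = n`. -/
theorem statement19 (n : ℕ) (hn : 1 ≤ n) :
    afMin (straightChain n) = (n + 1) / 2 ∧ Af (straightChain n) = n :=
  statement19_general n
end
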